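/- arXiv:2306.08113 — 5 statements merged into one kernel-verified Lean document; each statement's English description precedes it below -/
import Mathlib

section
/- For integers 2 ≤ x ≤ n and real q ∈ [0,1], the quantity q_r(x,q) = C(n,x)^{-1} · Σ_{j=0}^{x} C(r,j)·C(n-r,x-j)·(1-q)^{j(x-j)} satisfies q_r(x,q) ≤ (1-q)^{x-1} + C(n,x)^{-1}·(C(r,x) + C(n-r,x))·(1 - (1-q)^{x-1}). -/
open Finset

/-- The probability that a uniformly random `x`-subset of `[n]`, equipped with an
Erdős–Rényi graph of edge density `q`, has no edge between `[r]` and `[n] \ [r]`. -/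
noncomputable def qr (n r x : ℕ) (q : ℝ) : ℝ :=
  ((n.choose x : ℝ))⁻¹ *
    ∑ j ∈ Finset.range (x + 1),
      (r.choose j : ℝ) * ((n - r).choose (x - j) : ℝ) * (1 - q) ^ (j * (x - j))

lemma vandermonde_range (n r x : ℕ) (hrn : r ≤ n) :
    (n.choose x : ℝ) = ∑ j ∈ Finset.range (x + 1),
      (r.choose j : ℝ) * ((n - r).choose (x - j) : ℝ) := by
  have h : n.choose x = ∑ j ∈ Finset.range (x + 1), r.choose j * (n - r).choose (x - j) := by
    conv_lhs => rw [show n = r + (n - r) by omega]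
    rw [Nat.add_choose_eq, Finset.Nat.sum_antidiagonal_eq_sum_range_succ_mk]
  rw [h]
  push_cast
  rfl

theorem stmt_0 (n r x : ℕ) (q : ℝ) (hn : 2 ≤ n) (hr1 : 1 ≤ r) (hrn : r ≤ n - 1)
    (hx2 : 2 ≤ x) (hxn : x ≤ n) (hq0 : 0 ≤ q) (hq1 : q ≤ 1) :
    qr n r x q ≤ (1 - q) ^ (x - 1) +
      ((n.choose x : ℝ))⁻¹ * ((r.choose x : ℝ) + ((n - r).choose x : ℝ)) *
        (1 - (1 - q) ^ (x - 1)) := by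
  set t : ℝ := (1 - q) ^ (x - 1) with ht
  have hq1' : (0:ℝ) ≤ 1 - q := by linarith
  have hq1'' : (1:ℝ) - q ≤ 1 := by linarith
  have ht0 : 0 ≤ t := pow_nonneg hq1' _
  have ht1 : t ≤ 1 := pow_le_one₀ hq1' hq1''
  set f : ℕ → ℝ := fun j => (r.choose j : ℝ) * ((n - r).choose (x - j) : ℝ) with hf
  have hfnn : ∀ j, 0 ≤ f j := fun j => by positivity
  have hc : (0:ℝ) < (n.choose x : ℝ) := by
    exact_mod_cast Nat.choose_pos hxn
  have key : ∀ j ∈ Finset.range (x + 1),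
      f j * (1 - q) ^ (j * (x - j)) ≤
        t * f j + (1 - t) * (if j = 0 then f j else 0)
          + (1 - t) * (if j = x then f j else 0) := by
    intro j hj
    rw [Finset.mem_range] at hj
    by_cases h0 : j = 0
    · subst h0
      rw [if_pos rfl, if_neg (by omega : ¬(0:ℕ) = x)]
      simp only [Nat.zero_mul, pow_zero, mul_one, mul_zero, add_zero]
      exact le_of_eq (by ring)
    by_cases hx : j = x
    · subst hx
      rw [if_neg h0, if_pos rfl]
      simp only [Nat.sub_self, Nat.mul_zero, pow_zero, mul_one, mul_zero, add_zero]
      exact le_of_eq (by ring)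
    · simp only [h0, hx, if_false, mul_zero, add_zero]
      have hj1 : 1 ≤ j := by omega
      have hjx : j ≤ x - 1 := by omega
      have hexp : x - 1 ≤ j * (x - j) := by
        obtain ⟨j', rfl⟩ : ∃ j', j = j' + 1 := ⟨j - 1, by omega⟩
        obtain ⟨k', hk⟩ : ∃ k', x - (j' + 1) = k' + 1 := ⟨x - j' - 2, by omega⟩
        rw [hk]
        have : (j' + 1) * (k' + 1) = j' * k' + j' + k' + 1 := by ring
        omega
      have : (1 - q) ^ (j * (x - j)) ≤ t :=
        pow_le_pow_of_le_one hq1' hq1'' hexp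
      calc f j * (1 - q) ^ (j * (x - j)) ≤ f j * t :=
            mul_le_mul_of_nonneg_left this (hfnn j)
        _ = t * f j := mul_comm _ _
  have hsum : ∑ j ∈ Finset.range (x + 1), f j * (1 - q) ^ (j * (x - j)) ≤
      t * (n.choose x : ℝ) + (1 - t) * f 0 + (1 - t) * f x := by
    calc _ ≤ ∑ j ∈ Finset.range (x + 1),
          (t * f j + (1 - t) * (if j = 0 then f j else 0)
            + (1 - t) * (if j = x then f j else 0)) := Finset.sum_le_sum key
      _ = t * (∑ j ∈ Finset.range (x + 1), f j)
          + (1 - t) * f 0 + (1 - t) * f x := by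
          rw [Finset.sum_add_distrib, Finset.sum_add_distrib, ← Finset.mul_sum,
            ← Finset.mul_sum, ← Finset.mul_sum, Finset.sum_ite_eq' _ 0 f,
            Finset.sum_ite_eq' _ x f]
          simp [Finset.mem_range, Nat.lt_succ_iff]
      _ = _ := by rw [← vandermonde_range n r x (by omega)]
  have hf0 : f 0 = ((n - r).choose x : ℝ) := by simp [hf]
  have hfx : f x = (r.choose x : ℝ) := by simp [hf]
  rw [qr]
  rw [hf0, hfx] at hsum
  have := mul_le_mul_of_nonneg_left hsum (le_of_lt (inv_pos.mpr hc))
  refine le_trans this (le_of_eq ?_)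
  field_simp
  ring
end

section
/- If A, B are real numbers with 0 ≤ A ≤ 1 and 0 ≤ B ≤ 1, then A(B+1) ≤ A + B. Consequently, for A = C(n-r,x)/C(n,x) and B = C(r,x)/C(n-r,x) with 2 ≤ x ≤ n and 1 ≤ r ≤ n/2, one has C(n,x)^{-1}(C(r,x) + C(n-r,x)) ≤ 1 - rx/n + R₁ + R₂, where R₁ = r²/(n-r)² and R₂ = e^{-rx/n} - 1 + rx/n. -/
open Finset

-- pointwise factor comparison: (n - r - i) * n ≤ (n - i) * (n - r)
lemma factor_le (n r i : ℕ) : (n - r - i) * n ≤ (n - i) * (n - r) := by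
  rcases le_total (n - r) i with h | h
  · simp [Nat.sub_eq_zero_of_le h]
  · have h1 : (n - r - i) * n = (n - r) * n - i * n := Nat.sub_mul _ _ _
    have h2 : (n - i) * (n - r) = n * (n - r) - i * (n - r) := Nat.sub_mul _ _ _
    rw [h1, h2, Nat.mul_comm (n - r) n]
    exact Nat.sub_le_sub_left (Nat.mul_le_mul_left i (Nat.sub_le n r)) _

lemma descFac_mul_le (n r x : ℕ) :
    (n - r).descFactorial x * n ^ x ≤ n.descFactorial x * (n - r) ^ x := by
  rw [Nat.descFactorial_eq_prod_range, Nat.descFactorial_eq_prod_range,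
    show n ^ x = ∏ _i ∈ range x, n from by simp,
    show (n - r) ^ x = ∏ _i ∈ range x, (n - r) from by simp,
    ← Finset.prod_mul_distrib, ← Finset.prod_mul_distrib]
  exact Finset.prod_le_prod' fun i _ => factor_le n r i

-- (r - a) * (n - r) ≤ (n - r - a) * r when 2r ≤ n
lemma factor2_le (n r a : ℕ) (h : 2 * r ≤ n) : (r - a) * (n - r) ≤ (n - r - a) * r := by
  rcases le_total r a with h' | h'
  · simp [Nat.sub_eq_zero_of_le h']
  · have hrn : r ≤ n - r := by omega
    have h1 : (r - a) * (n - r) = r * (n - r) - a * (n - r) := Nat.sub_mul _ _ _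
    have h2 : (n - r - a) * r = (n - r) * r - a * r := Nat.sub_mul _ _ _
    rw [h1, h2, Nat.mul_comm (n - r) r]
    exact Nat.sub_le_sub_left (Nat.mul_le_mul_left a hrn) _

lemma descFac2_le (n r x : ℕ) (hx : 2 ≤ x) (h : 2 * r ≤ n) :
    r.descFactorial x * (n - r) ^ 2 ≤ (n - r).descFactorial x * r ^ 2 := by
  obtain ⟨y, rfl⟩ : ∃ y, x = y + 2 := ⟨x - 2, by omega⟩
  rw [Nat.descFactorial_succ, Nat.descFactorial_succ, Nat.descFactorial_succ,
    Nat.descFactorial_succ]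
  have h1 := factor2_le n r (y + 1) h
  have h2 := factor2_le n r y h
  have h3 : r.descFactorial y ≤ (n - r).descFactorial y :=
    Nat.descFactorial_le y (by omega)
  calc (r - (y + 1)) * ((r - y) * r.descFactorial y) * (n - r) ^ 2
      = ((r - (y + 1)) * (n - r)) * ((r - y) * (n - r)) * r.descFactorial y := by ring
    _ ≤ ((n - r - (y + 1)) * r) * ((n - r - y) * r) * (n - r).descFactorial y :=
        Nat.mul_le_mul (Nat.mul_le_mul h1 h2) h3
    _ = (n - r - (y + 1)) * ((n - r - y) * (n - r).descFactorial y) * r ^ 2 := by ring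

lemma choose_mul_le (n r x : ℕ) :
    (n - r).choose x * n ^ x ≤ n.choose x * (n - r) ^ x := by
  have := descFac_mul_le n r x
  rw [Nat.descFactorial_eq_factorial_mul_choose, Nat.descFactorial_eq_factorial_mul_choose] at this
  have hf : 0 < x.factorial := Nat.factorial_pos x
  refine Nat.le_of_mul_le_mul_left ?_ hf
  calc x.factorial * ((n - r).choose x * n ^ x)
      = x.factorial * (n - r).choose x * n ^ x := by ring
    _ ≤ x.factorial * n.choose x * (n - r) ^ x := this
    _ = x.factorial * (n.choose x * (n - r) ^ x) := by ring

lemma choose2_le (n r x : ℕ) (hx : 2 ≤ x) (h : 2 * r ≤ n) :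
    r.choose x * (n - r) ^ 2 ≤ (n - r).choose x * r ^ 2 := by
  have := descFac2_le n r x hx h
  rw [Nat.descFactorial_eq_factorial_mul_choose, Nat.descFactorial_eq_factorial_mul_choose] at this
  have hf : 0 < x.factorial := Nat.factorial_pos x
  refine Nat.le_of_mul_le_mul_left ?_ hf
  calc x.factorial * (r.choose x * (n - r) ^ 2)
      = x.factorial * r.choose x * (n - r) ^ 2 := by ring
    _ ≤ x.factorial * (n - r).choose x * r ^ 2 := this
    _ = x.factorial * ((n - r).choose x * r ^ 2) := by ring

theorem stmt_3 (n r x : ℕ) (hx2 : 2 ≤ x) (hxn : x ≤ n) (hr1 : 1 ≤ r) (hr2 : 2 * r ≤ n) :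
    (∀ A B : ℝ, 0 ≤ A → A ≤ 1 → 0 ≤ B → B ≤ 1 → A * (B + 1) ≤ A + B) ∧
      ((n.choose x : ℝ))⁻¹ * ((r.choose x : ℝ) + ((n - r).choose x : ℝ)) ≤
        1 - (r : ℝ) * x / n + (r : ℝ) ^ 2 / ((n - r : ℕ) : ℝ) ^ 2 +
          (Real.exp (-((r : ℝ) * x) / n) - 1 + (r : ℝ) * x / n) := by
  constructor
  · intro A B hA0 hA1 hB0 hB1
    nlinarith
  · have hn0 : 0 < n := by omega
    have hnr0 : 0 < n - r := by omega
    have hnR : (0:ℝ) < (n:ℝ) := by exact_mod_cast hn0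
    have hnrR : (0:ℝ) < ((n - r : ℕ) : ℝ) := by exact_mod_cast hnr0
    have hc : (0:ℝ) < (n.choose x : ℝ) := by exact_mod_cast Nat.choose_pos hxn
    -- bound B-part : choose r x / choose n x ≤ r^2 / (n-r)^2
    have hB : (r.choose x : ℝ) / (n.choose x : ℝ) ≤ (r:ℝ)^2 / ((n - r : ℕ) : ℝ)^2 := by
      rw [div_le_div_iff₀ hc (by positivity)]
      have h1 : r.choose x * (n - r) ^ 2 ≤ (n - r).choose x * r ^ 2 := choose2_le n r x hx2 hr2
      have h2 : (n - r).choose x * r ^ 2 ≤ n.choose x * r ^ 2 :=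
        Nat.mul_le_mul_right _ (Nat.choose_le_choose x (Nat.sub_le n r))
      have := h1.trans h2
      calc (r.choose x : ℝ) * ((n - r : ℕ) : ℝ)^2 = ((r.choose x * (n - r)^2 : ℕ) : ℝ) := by
            push_cast; ring
        _ ≤ ((n.choose x * r ^ 2 : ℕ) : ℝ) := by exact_mod_cast this
        _ = (r:ℝ)^2 * (n.choose x : ℝ) := by push_cast; ring
    -- bound A-part : choose (n-r) x / choose n x ≤ exp(-(r x)/n)
    have hA : ((n - r).choose x : ℝ) / (n.choose x : ℝ) ≤ Real.exp (-((r : ℝ) * x) / n) := by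
      have hstep : ((n - r).choose x : ℝ) / (n.choose x : ℝ) ≤ (((n - r : ℕ) : ℝ) / n) ^ x := by
        rw [div_pow, div_le_div_iff₀ hc (by positivity)]
        have := choose_mul_le n r x
        calc ((n - r).choose x : ℝ) * (n:ℝ)^x = (((n - r).choose x * n ^ x : ℕ) : ℝ) := by
              push_cast; ring
          _ ≤ ((n.choose x * (n - r) ^ x : ℕ) : ℝ) := by exact_mod_cast this
          _ = ((n - r : ℕ) : ℝ)^x * (n.choose x : ℝ) := by push_cast; ring
      refine hstep.trans ?_
      have hbase : ((n - r : ℕ) : ℝ) / n ≤ Real.exp (-((r:ℝ)/n)) := by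
        have hcast : ((n - r : ℕ) : ℝ) = (n:ℝ) - r :=
          Nat.cast_sub (by omega : r ≤ n)
        have := Real.add_one_le_exp (-((r:ℝ)/n))
        rw [hcast]
        have : ((n:ℝ) - r) / n = -((r:ℝ)/n) + 1 := by field_simp; ring
        rw [this]
        exact Real.add_one_le_exp _
      have hpow : (((n - r : ℕ) : ℝ) / n) ^ x ≤ (Real.exp (-((r:ℝ)/n))) ^ x :=
        pow_le_pow_left₀ (by positivity) hbase x
      refine hpow.trans_eq ?_
      rw [← Real.exp_nat_mul]
      congr 1
      rw [eq_div_iff (ne_of_gt hnR)]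
      field_simp
    -- combine
    rw [mul_add, inv_mul_eq_div, inv_mul_eq_div]
    have : Real.exp (-((r : ℝ) * x) / n) + (r:ℝ)^2 / ((n - r : ℕ) : ℝ)^2 =
        1 - (r : ℝ) * x / n + (r : ℝ) ^ 2 / ((n - r : ℕ) : ℝ) ^ 2 +
          (Real.exp (-((r : ℝ) * x) / n) - 1 + (r : ℝ) * x / n) := by ring
    linarith
end

section
/- For integers 1 ≤ r ≤ n/2, 2 ≤ x ≤ n and real q ∈ [0,1], the probability q_r(x,q) that a uniformly random x-subset of [n] equipped with an independent Bernoulli(q) edge set has no edge joining [r] to [n]∖[r] satisfies q_r(x,q) ≤ 1 - (rx/n - r²/(n-r)² - (e^{-rx/n} - 1 + rx/n)) · (1 - (1-q)^{x-1}). -/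
open Finset

lemma descFac_ratio (m n x : ℕ) (h : m ≤ n) :
    m.descFactorial x * n ^ x ≤ n.descFactorial x * m ^ x := by
  rw [Nat.descFactorial_eq_prod_range, Nat.descFactorial_eq_prod_range]
  have hn : n ^ x = ∏ _i ∈ range x, n := by rw [Finset.prod_const, card_range]
  have hm : m ^ x = ∏ _i ∈ range x, m := by rw [Finset.prod_const, card_range]
  rw [hn, hm, ← Finset.prod_mul_distrib, ← Finset.prod_mul_distrib]
  apply Finset.prod_le_prod'
  intro i _
  calc (m - i) * n = m * n - i * n := by rw [Nat.sub_mul]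
    _ ≤ m * n - i * m := Nat.sub_le_sub_left (Nat.mul_le_mul_left i h) _
    _ = (n - i) * m := by rw [Nat.sub_mul, Nat.mul_comm m n]

lemma choose_ratio_nat (m n x : ℕ) (h : m ≤ n) :
    m.choose x * n ^ x ≤ n.choose x * m ^ x := by
  have hd := descFac_ratio m n x h
  rw [Nat.descFactorial_eq_factorial_mul_choose, Nat.descFactorial_eq_factorial_mul_choose,
    mul_assoc, mul_assoc] at hd
  exact Nat.le_of_mul_le_mul_left hd (Nat.factorial_pos x)

lemma choose_ratio_real (m n x : ℕ) (h : m ≤ n) (hn : 0 < n) :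
    (m.choose x : ℝ) ≤ (n.choose x : ℝ) * ((m : ℝ) / n) ^ x := by
  have hnR : (0 : ℝ) < (n : ℝ) := by exact_mod_cast hn
  have hnx : (0 : ℝ) < (n : ℝ) ^ x := pow_pos hnR x
  have hd := choose_ratio_nat m n x h
  have hdR : (m.choose x : ℝ) * (n : ℝ) ^ x ≤ (n.choose x : ℝ) * (m : ℝ) ^ x := by
    exact_mod_cast hd
  rw [div_pow, mul_div_assoc', le_div_iff₀ hnx]
  linarith

theorem stmt_4 (n r x : ℕ) (q : ℝ) (hr1 : 1 ≤ r) (hr2 : 2 * r ≤ n)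
    (hx2 : 2 ≤ x) (hxn : x ≤ n) (hq0 : 0 ≤ q) (hq1 : q ≤ 1) :
    qr n r x q ≤ 1 -
      ((r : ℝ) * x / n - (r : ℝ) ^ 2 / ((n - r : ℕ) : ℝ) ^ 2 -
          (Real.exp (-((r : ℝ) * x) / n) - 1 + (r : ℝ) * x / n)) *
        (1 - (1 - q) ^ (x - 1)) := by
  have hrn : r < n := by omega
  have hn0 : 0 < n := by omega
  have hnr0 : 0 < n - r := by omega
  have hnR : (0 : ℝ) < (n : ℝ) := by exact_mod_cast hn0
  have hnrR : (0 : ℝ) < ((n - r : ℕ) : ℝ) := by exact_mod_cast hnr0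
  set p : ℝ := 1 - q with hp
  have hp0 : 0 ≤ p := by simp [hp]; linarith
  have hp1 : p ≤ 1 := by simp [hp]; linarith
  have hc0 : 0 < n.choose x := Nat.choose_pos hxn
  have hcR : (0 : ℝ) < (n.choose x : ℝ) := by exact_mod_cast hc0
  -- abbreviations
  set C : ℝ := (n.choose x : ℝ) with hC
  set E : ℝ := Real.exp (-((r : ℝ) * x) / n) with hE
  set nr : ℝ := ((n - r : ℕ) : ℝ) with hnr
  set g : ℕ → ℝ := fun j => (r.choose j : ℝ) * ((n - r).choose (x - j) : ℝ) with hg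
  set f : ℕ → ℝ := fun j => g j * p ^ (j * (x - j)) with hf
  -- Vandermonde
  have hvand : C = ∑ j ∈ Finset.range (x + 1), g j := by
    have h1 : r + (n - r) = n := by omega
    have h2 := Nat.add_choose_eq r (n - r) x
    rw [Finset.Nat.sum_antidiagonal_eq_sum_range_succ
      (fun a b => r.choose a * (n - r).choose b), h1] at h2
    rw [hC, h2]
    push_cast
    rfl
  have hxx : x - 1 + 1 = x := by omega
  -- peel off the first and last terms of a sum over range (x+1)
  have peel : ∀ F : ℕ → ℝ, ∑ j ∈ Finset.range (x + 1), F j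
      = (∑ j ∈ Finset.range (x - 1), F (j + 1)) + F 0 + F x := by
    intro F
    rw [Finset.sum_range_succ]
    congr 1
    conv_lhs => rw [← hxx]
    rw [Finset.sum_range_succ']
  have hg0 : g 0 = ((n - r).choose x : ℝ) := by simp [hg]
  have hgx : g x = (r.choose x : ℝ) := by simp [hg]
  have hf0 : f 0 = ((n - r).choose x : ℝ) := by simp [hf, hg]
  have hfx : f x = (r.choose x : ℝ) := by simp [hf, hg]
  set a0 : ℝ := ((n - r).choose x : ℝ) with ha0
  set ax : ℝ := (r.choose x : ℝ) with hax
  -- the middle sum of g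
  have hmidg : ∑ j ∈ Finset.range (x - 1), g (j + 1) = C - a0 - ax := by
    rw [hvand, peel g, hg0, hgx]; ring
  have hmidg_nonneg : 0 ≤ ∑ j ∈ Finset.range (x - 1), g (j + 1) := by
    apply Finset.sum_nonneg
    intro j _
    exact mul_nonneg (Nat.cast_nonneg _) (Nat.cast_nonneg _)
  -- bound the middle sum of f
  have hmidf : ∑ j ∈ Finset.range (x - 1), f (j + 1)
      ≤ p ^ (x - 1) * (C - a0 - ax) := by
    rw [← hmidg, Finset.mul_sum]
    apply Finset.sum_le_sum
    intro j hj
    simp only [Finset.mem_range] at hj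
    have hgj : 0 ≤ g (j + 1) := mul_nonneg (Nat.cast_nonneg _) (Nat.cast_nonneg _)
    have hexp : x - 1 ≤ (j + 1) * (x - (j + 1)) := by
      have h1 : 1 ≤ x - (j + 1) := by omega
      calc x - 1 = j + (x - (j + 1)) := by omega
        _ ≤ j * (x - (j + 1)) + (x - (j + 1)) :=
            add_le_add_left (Nat.le_mul_of_pos_right j h1) _
        _ = (j + 1) * (x - (j + 1)) := by ring
    have hpow : p ^ ((j + 1) * (x - (j + 1))) ≤ p ^ (x - 1) :=
      pow_le_pow_of_le_one hp0 hp1 hexp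
    calc f (j + 1) = g (j + 1) * p ^ ((j + 1) * (x - (j + 1))) := rfl
      _ ≤ g (j + 1) * p ^ (x - 1) := mul_le_mul_of_nonneg_left hpow hgj
      _ = p ^ (x - 1) * g (j + 1) := by ring
  -- total sum bound
  have hsum : ∑ j ∈ Finset.range (x + 1), f j
      ≤ a0 + ax + p ^ (x - 1) * (C - a0 - ax) := by
    rw [peel f, hf0, hfx]
    linarith
  -- bound on a0
  have hP0 : a0 ≤ C * E := by
    have h1 : a0 ≤ C * (nr / n) ^ x := choose_ratio_real (n - r) n x (Nat.sub_le n r) hn0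
    have h2 : nr / (n : ℝ) = 1 - (r : ℝ) / n := by
      rw [hnr, Nat.cast_sub hrn.le, sub_div, div_self (ne_of_gt hnR)]
    have h3 : (1 : ℝ) - (r : ℝ) / n ≤ Real.exp (-((r : ℝ) / n)) := by
      have := Real.add_one_le_exp (-((r : ℝ) / n))
      linarith
    have h30 : (0 : ℝ) ≤ 1 - (r : ℝ) / n := by
      rw [sub_nonneg, div_le_one hnR]
      exact_mod_cast hrn.le
    have h4 : (nr / n) ^ x ≤ Real.exp (-((r : ℝ) / n)) ^ x := by
      rw [h2]
      exact pow_le_pow_left₀ h30 h3 x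
    have h5 : Real.exp (-((r : ℝ) / n)) ^ x = E := by
      rw [← Real.exp_nat_mul, hE]
      congr 1
      ring
    have h6 : (nr / n) ^ x ≤ E := h5 ▸ h4
    calc a0 ≤ C * (nr / n) ^ x := h1
      _ ≤ C * E := mul_le_mul_of_nonneg_left h6 hcR.le
  -- bound on ax
  have hPx : ax ≤ C * ((r : ℝ) ^ 2 / nr ^ 2) := by
    have h1 : ax ≤ C * ((r : ℝ) / n) ^ x := choose_ratio_real r n x hrn.le hn0
    have hr0 : (0 : ℝ) ≤ (r : ℝ) / n := div_nonneg (Nat.cast_nonneg r) hnR.le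
    have hr1' : (r : ℝ) / n ≤ 1 := by
      rw [div_le_one hnR]; exact_mod_cast hrn.le
    have h2 : ((r : ℝ) / n) ^ x ≤ ((r : ℝ) / n) ^ 2 :=
      pow_le_pow_of_le_one hr0 hr1' hx2
    have hnrn : nr ≤ (n : ℝ) := by
      rw [hnr]; exact_mod_cast Nat.sub_le n r
    have h3 : ((r : ℝ) / n) ^ 2 ≤ (r : ℝ) ^ 2 / nr ^ 2 := by
      rw [div_pow]
      apply div_le_div_of_nonneg_left (by positivity) (by positivity)
      exact pow_le_pow_left₀ hnrR.le hnrn 2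
    calc ax ≤ C * ((r : ℝ) / n) ^ x := h1
      _ ≤ C * ((r : ℝ) ^ 2 / nr ^ 2) :=
          mul_le_mul_of_nonneg_left (h2.trans h3) hcR.le
  -- final algebra
  set t : ℝ := p ^ (x - 1) with ht
  have ht0 : 0 ≤ t := pow_nonneg hp0 _
  have ht1 : t ≤ 1 := pow_le_one₀ hp0 hp1
  have hqr : qr n r x q = C⁻¹ * ∑ j ∈ Finset.range (x + 1), f j := by
    rw [qr, hC]
  rw [hqr]
  have hB : a0 + ax ≤ C * (E + (r : ℝ) ^ 2 / nr ^ 2) := by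
    rw [mul_add]; linarith
  have hstep : C⁻¹ * ∑ j ∈ Finset.range (x + 1), f j
      ≤ C⁻¹ * (a0 + ax + t * (C - a0 - ax)) := by
    apply mul_le_mul_of_nonneg_left _ (inv_nonneg.mpr hcR.le)
    rw [ht]
    linarith [hsum]
  have h7 : C⁻¹ * (a0 + ax + t * (C - a0 - ax))
      = (C⁻¹ * (a0 + ax)) * (1 - t) + t := by
    field_simp
    ring
  have h8 : C⁻¹ * (a0 + ax) ≤ E + (r : ℝ) ^ 2 / nr ^ 2 := by
    rw [inv_mul_le_iff₀ hcR]
    exact hB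
  have h9 : (C⁻¹ * (a0 + ax)) * (1 - t) ≤ (E + (r : ℝ) ^ 2 / nr ^ 2) * (1 - t) :=
    mul_le_mul_of_nonneg_right h8 (by linarith)
  calc C⁻¹ * ∑ j ∈ Finset.range (x + 1), f j
      ≤ C⁻¹ * (a0 + ax + t * (C - a0 - ax)) := hstep
    _ = (C⁻¹ * (a0 + ax)) * (1 - t) + t := h7
    _ ≤ (E + (r : ℝ) ^ 2 / nr ^ 2) * (1 - t) + t := by linarith
    _ = 1 - ((r : ℝ) * x / n - (r : ℝ) ^ 2 / nr ^ 2 - (E - 1 + (r : ℝ) * x / n)) * (1 - t) := by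
        ring
end

section
/- For integers 1 ≤ r ≤ n/2, 2 ≤ x ≤ n and real q ∈ [0,1], one has q_r(x,q) ≤ q_r(2,q) = 1 - q + C(n,2)^{-1}(C(r,2) + C(n-r,2)) = 1 - 2q·r(n-r)/(n(n-1)), and hence q_r(x,q) ≤ 1 - 2q·r(n-r)/(n(n-1)). -/
open Finset

/-- Vandermonde's identity in `range` form. -/
lemma aux_vand (r s x : ℕ) :
    ∑ j ∈ Finset.range (x+1), r.choose j * s.choose (x-j) = (r+s).choose x := by
  rw [Nat.add_choose_eq, Finset.Nat.sum_antidiagonal_eq_sum_range_succ_mk]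

/-- Weighted Vandermonde identity. -/
lemma aux_wvand (r s y : ℕ) :
    ∑ j ∈ Finset.range (y+3), j * ((y+2) - j) * ((r+1).choose j * ((s+1).choose ((y+2)-j)))
      = (r+1)*(s+1) * ((r+s).choose y) := by
  rw [Finset.sum_range_succ' _ (y+2)]
  simp only [Nat.zero_mul, Nat.mul_zero, Nat.zero_add, Nat.add_zero]
  rw [Finset.sum_range_succ]
  have h0 : (y+2) - (y+1+1) = 0 := by omega
  rw [h0]
  simp only [Nat.mul_zero, Nat.zero_mul, Nat.add_zero]
  have : ∀ i ∈ Finset.range (y+1),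
      (i+1) * ((y+2)-(i+1)) * ((r+1).choose (i+1) * ((s+1).choose ((y+2)-(i+1))))
      = (r+1)*(s+1) * (r.choose i * s.choose (y - i)) := by
    intro i hi
    rw [Finset.mem_range] at hi
    have h1 : (y+2)-(i+1) = (y-i)+1 := by omega
    rw [h1]
    have e1 : (r+1).choose (i+1) * (i+1) = (r+1) * r.choose i :=
      (Nat.add_one_mul_choose_eq r i).symm
    have e2 : (s+1).choose ((y-i)+1) * ((y-i)+1) = (s+1) * s.choose (y-i) :=
      (Nat.add_one_mul_choose_eq s (y-i)).symm
    calc (i+1) * ((y-i)+1) * ((r+1).choose (i+1) * ((s+1).choose ((y-i)+1)))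
        = ((r+1).choose (i+1) * (i+1)) * ((s+1).choose ((y-i)+1) * ((y-i)+1)) := by ring
      _ = ((r+1) * r.choose i) * ((s+1) * s.choose (y-i)) := by rw [e1, e2]
      _ = (r+1)*(s+1) * (r.choose i * s.choose (y-i)) := by ring
  rw [Finset.sum_congr rfl this, ← Finset.mul_sum, aux_vand]

/-- Convexity bound: `(1-q)^m` lies below the chord of `(1-q)^M` on `[0, M]`. -/
lemma aux_pow_le_lin (q : ℝ) (hq0 : 0 ≤ q) (hq1 : q ≤ 1) (M : ℕ) (hM : 1 ≤ M) :
    ∀ m : ℕ, m ≤ M → (1 - q)^m ≤ 1 - q * m / M := by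
  intro m
  induction m with
  | zero => simp
  | succ m ih =>
    intro hm
    have ihm := ih (by omega)
    have hM0 : (0:ℝ) < M := by exact_mod_cast Nat.pos_of_ne_zero (by omega)
    have h1q : (0:ℝ) ≤ 1 - q := by linarith
    have step : (1-q)^(m+1) ≤ (1-q) * (1 - q * m / M) := by
      rw [pow_succ, mul_comm ((1-q)^m) (1-q)]
      exact mul_le_mul_of_nonneg_left ihm h1q
    have hm' : (m:ℝ) ≤ (M:ℝ) - 1 := by
      have : (m:ℝ) + 1 ≤ M := by exact_mod_cast hm
      linarith
    have key : (1-q) * (1 - q * m / M) ≤ 1 - q * (m+1) / M := by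
      have hqm : 0 ≤ (M:ℝ) - 1 - q * m := by nlinarith
      have hpos : 0 ≤ q / M * ((M:ℝ) - 1 - q*m) :=
        mul_nonneg (div_nonneg hq0 hM0.le) hqm
      have expand : 1 - q*((m:ℝ)+1)/M - (1-q)*(1-q*(m:ℝ)/M) = q/M*((M:ℝ)-1-q*(m:ℝ)) := by
        field_simp
        ring
      linarith
    push_cast
    linarith

lemma aux_le_mul_self (j : ℕ) : j ≤ j * j := by
  rcases Nat.eq_zero_or_pos j with h | h
  · simp [h]
  · exact Nat.le_mul_of_pos_left j h

lemma aux_two_choose_two (m : ℕ) : m * (m - 1) = 2 * m.choose 2 := by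
  rcases m with _ | k
  · simp
  · rw [Nat.choose_two_right]
    simp only [Nat.add_sub_cancel]
    have he : 2 ∣ (k + 1) * k := by
      rw [Nat.mul_comm]
      exact (Nat.even_mul_succ_self k).two_dvd
    exact (Nat.mul_div_cancel' he).symm

lemma aux_jbound (j y : ℕ) (hj : j ≤ y + 2) : j * ((y + 2) - j) ≤ (y + 2).choose 2 := by
  set k := (y + 2) - j with hk
  have hjk : j + k = y + 2 := by omega
  have h1 : 2 * (j * k) + (j + k) ≤ (j + k) * (j + k) := by
    nlinarith [aux_le_mul_self j, aux_le_mul_self k]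
  rw [hjk] at h1
  have h2 : (y + 2) * ((y + 2) - 1) = 2 * (y + 2).choose 2 := aux_two_choose_two (y + 2)
  have h3 : (y + 2) * (y + 1) = 2 * (y + 2).choose 2 := by simpa using h2
  have h4 : 2 * (j * k) ≤ 2 * (y + 2).choose 2 := by nlinarith
  exact Nat.le_of_mul_le_mul_left h4 (by norm_num)

lemma aux_choose_two_split (r s : ℕ) :
    (r+s).choose 2 = s.choose 2 + r * s + r.choose 2 := by
  have h := aux_vand r s 2
  rw [Finset.sum_range_succ, Finset.sum_range_succ, Finset.sum_range_succ,
    Finset.sum_range_zero] at h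
  simp [Nat.choose_one_right] at h
  omega

lemma aux_qr_two (r s : ℕ) (q : ℝ) (hr : 1 ≤ r) (hs : 1 ≤ s) :
    qr (r+s) r 2 q = 1 - q * ((r:ℝ)*(s:ℝ)) / (((r+s).choose 2 : ℝ)) := by
  have hB0 : (0:ℝ) < ((r+s).choose 2 : ℝ) := by
    exact_mod_cast Nat.choose_pos (by omega)
  have hBeq : (((r+s).choose 2 : ℝ)) = (s.choose 2 : ℝ) + (r:ℝ)*(s:ℝ) + (r.choose 2 : ℝ) := by
    exact_mod_cast congrArg (Nat.cast : ℕ → ℝ) (aux_choose_two_split r s)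
  unfold qr
  have hnr : r + s - r = s := by omega
  rw [hnr]
  rw [Finset.sum_range_succ, Finset.sum_range_succ, Finset.sum_range_succ,
    Finset.sum_range_zero]
  simp only [Nat.choose_zero_right, Nat.choose_one_right, Nat.cast_one, Nat.sub_self,
    Nat.mul_zero, Nat.zero_mul, pow_zero, mul_one, one_mul, pow_one, Nat.sub_zero, zero_add]
  norm_num
  field_simp
  linear_combination -hBeq

lemma aux_qr_le (r' s' y : ℕ) (q : ℝ) (hq0 : 0 ≤ q) (hq1 : q ≤ 1) (hy : y ≤ r' + s') :
    qr (r'+s'+2) (r'+1) (y+2) q ≤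
      1 - q * (((r'+1):ℕ):ℝ) * (((s'+1):ℕ):ℝ) / (((r'+s'+2).choose 2 : ℝ)) := by
  have hA0 : (0:ℝ) < ((r'+s'+2).choose (y+2) : ℝ) := by
    exact_mod_cast Nat.choose_pos (by omega)
  have hM1 : 1 ≤ (y+2).choose 2 := Nat.choose_pos (by omega)
  have hM0 : (0:ℝ) < ((y+2).choose 2 : ℝ) := by exact_mod_cast hM1
  have hD0 : (0:ℝ) < ((r'+s').choose y : ℝ) := by exact_mod_cast Nat.choose_pos hy
  have hB0 : (0:ℝ) < ((r'+s'+2).choose 2 : ℝ) := by exact_mod_cast Nat.choose_pos (by omega)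
  have hAM : (r'+s'+2).choose (y+2) * (y+2).choose 2
      = (r'+s'+2).choose 2 * ((r'+s').choose y) := by
    have h := Nat.choose_mul (n := r'+s'+2) (k := y+2) (s := 2) (by omega)
    simpa using h
  have hAMR : (((r'+s'+2).choose (y+2) : ℝ)) * (((y+2).choose 2 : ℝ))
      = (((r'+s'+2).choose 2 : ℝ)) * (((r'+s').choose y : ℝ)) := by exact_mod_cast hAM
  unfold qr
  have hnr : r'+s'+2 - (r'+1) = s'+1 := by omega
  rw [hnr]
  set M := (y+2).choose 2 with hMdef
  have hterm : ∀ j ∈ Finset.range (y+2+1),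
      ((r'+1).choose j : ℝ) * (((s'+1).choose ((y+2)-j)) : ℝ) * (1-q)^(j*((y+2)-j)) ≤
      ((r'+1).choose j : ℝ) * (((s'+1).choose ((y+2)-j)) : ℝ)
        * (1 - q * (j*((y+2)-j) : ℕ) / (M:ℝ)) := by
    intro j hj
    rw [Finset.mem_range] at hj
    exact mul_le_mul_of_nonneg_left
      (aux_pow_le_lin q hq0 hq1 M hM1 _ (aux_jbound j y (by omega)))
      (mul_nonneg (Nat.cast_nonneg _) (Nat.cast_nonneg _))
  have hsum := Finset.sum_le_sum hterm
  have hsplit : ∑ j ∈ Finset.range (y+2+1),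
      ((r'+1).choose j : ℝ) * (((s'+1).choose ((y+2)-j)) : ℝ)
        * (1 - q * (j*((y+2)-j) : ℕ) / (M:ℝ))
      = (((r'+s'+2).choose (y+2) : ℝ))
        - q / (M:ℝ) * ((r'+1:ℕ):ℝ) * ((s'+1:ℕ):ℝ) * (((r'+s').choose y : ℝ)) := by
    have e1 : ∑ j ∈ Finset.range (y+2+1),
        ((r'+1).choose j : ℝ) * (((s'+1).choose ((y+2)-j)) : ℝ)
        = (((r'+s'+2).choose (y+2) : ℝ)) := by
      have h := aux_vand (r'+1) (s'+1) (y+2)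
      rw [show r'+1+(s'+1) = r'+s'+2 from by omega] at h
      exact_mod_cast congrArg (Nat.cast : ℕ → ℝ) h
    have e2 : ∑ j ∈ Finset.range (y+2+1),
        ((j*((y+2)-j) : ℕ) : ℝ) * (((r'+1).choose j : ℝ) * (((s'+1).choose ((y+2)-j)) : ℝ))
        = ((r'+1:ℕ):ℝ) * ((s'+1:ℕ):ℝ) * (((r'+s').choose y : ℝ)) := by
      have h := aux_wvand r' s' y
      exact_mod_cast congrArg (Nat.cast : ℕ → ℝ) h
    calc ∑ j ∈ Finset.range (y+2+1),
        ((r'+1).choose j : ℝ) * (((s'+1).choose ((y+2)-j)) : ℝ)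
          * (1 - q * (j*((y+2)-j) : ℕ) / (M:ℝ))
        = ∑ j ∈ Finset.range (y+2+1),
          (((r'+1).choose j : ℝ) * (((s'+1).choose ((y+2)-j)) : ℝ)
            - q / (M:ℝ) * (((j*((y+2)-j) : ℕ) : ℝ)
              * (((r'+1).choose j : ℝ) * (((s'+1).choose ((y+2)-j)) : ℝ)))) := by
          apply Finset.sum_congr rfl
          intro j _
          ring
      _ = (∑ j ∈ Finset.range (y+2+1),
            ((r'+1).choose j : ℝ) * (((s'+1).choose ((y+2)-j)) : ℝ))
          - q / (M:ℝ) * ∑ j ∈ Finset.range (y+2+1),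
            (((j*((y+2)-j) : ℕ) : ℝ)
              * (((r'+1).choose j : ℝ) * (((s'+1).choose ((y+2)-j)) : ℝ))) := by
          rw [Finset.sum_sub_distrib, Finset.mul_sum]
      _ = _ := by rw [e1, e2]; ring
  rw [hsplit] at hsum
  have step1 : (((r'+s'+2).choose (y+2) : ℝ))⁻¹ * ∑ j ∈ Finset.range (y+2+1),
      ((r'+1).choose j : ℝ) * (((s'+1).choose ((y+2)-j)) : ℝ) * (1-q)^(j*((y+2)-j))
      ≤ (((r'+s'+2).choose (y+2) : ℝ))⁻¹ * ((((r'+s'+2).choose (y+2) : ℝ))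
        - q / (M:ℝ) * ((r'+1:ℕ):ℝ) * ((s'+1:ℕ):ℝ) * (((r'+s').choose y : ℝ))) :=
    mul_le_mul_of_nonneg_left hsum (inv_nonneg.mpr hA0.le)
  refine le_trans step1 (le_of_eq ?_)
  push_cast at hAMR ⊢
  field_simp
  linear_combination (q * ((r':ℝ)+1) * ((s':ℝ)+1)) * hAMR

theorem stmt_5 (n r x : ℕ) (q : ℝ) (hr1 : 1 ≤ r) (hr2 : 2 * r ≤ n)
    (hx2 : 2 ≤ x) (hxn : x ≤ n) (hq0 : 0 ≤ q) (hq1 : q ≤ 1) :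
    (qr n r x q ≤ qr n r 2 q ∧
      qr n r 2 q = 1 - q +
        ((n.choose 2 : ℝ))⁻¹ * ((r.choose 2 : ℝ) + ((n - r).choose 2 : ℝ)) * q ∧
      qr n r 2 q = 1 - 2 * q * ((r : ℝ) * ((n : ℝ) - r)) / ((n : ℝ) * ((n : ℝ) - 1))) ∧
    qr n r x q ≤ 1 - 2 * q * ((r : ℝ) * ((n : ℝ) - r)) / ((n : ℝ) * ((n : ℝ) - 1)) := by
  obtain ⟨r', rfl⟩ : ∃ r', r = r' + 1 := ⟨r - 1, by omega⟩
  obtain ⟨s', rfl⟩ : ∃ s', n = r' + s' + 2 := ⟨n - r' - 2, by omega⟩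
  obtain ⟨y, rfl⟩ : ∃ y, x = y + 2 := ⟨x - 2, by omega⟩
  have hy : y ≤ r' + s' := by omega
  have hadd : r' + 1 + (s' + 1) = r' + s' + 2 := by omega
  have hnr : r' + s' + 2 - (r' + 1) = s' + 1 := by omega
  have hB0 : (0:ℝ) < ((r'+s'+2).choose 2 : ℝ) := by
    exact_mod_cast Nat.choose_pos (by omega)
  -- value at 2
  have e0 : qr (r'+s'+2) (r'+1) 2 q
      = 1 - q * (((r'+1:ℕ):ℝ) * ((s'+1:ℕ):ℝ)) / (((r'+s'+2).choose 2 : ℝ)) := by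
    have h := aux_qr_two (r'+1) (s'+1) q (by omega) (by omega)
    rwa [hadd] at h
  -- monotonicity
  have hle : qr (r'+s'+2) (r'+1) (y+2) q
      ≤ 1 - q * (((r'+1:ℕ):ℝ) * ((s'+1:ℕ):ℝ)) / (((r'+s'+2).choose 2 : ℝ)) := by
    have h := aux_qr_le r' s' y q hq0 hq1 hy
    calc qr (r'+s'+2) (r'+1) (y+2) q
        ≤ 1 - q * (((r'+1):ℕ):ℝ) * (((s'+1):ℕ):ℝ) / (((r'+s'+2).choose 2 : ℝ)) := h
      _ = _ := by ring
  have hmono : qr (r'+s'+2) (r'+1) (y+2) q ≤ qr (r'+s'+2) (r'+1) 2 q := by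
    rw [e0]; exact hle
  -- split of choose 2
  have hBeq : (((r'+s'+2).choose 2 : ℝ))
      = ((s'+1).choose 2 : ℝ) + ((r'+1:ℕ):ℝ)*((s'+1:ℕ):ℝ) + ((r'+1).choose 2 : ℝ) := by
    have h := aux_choose_two_split (r'+1) (s'+1)
    rw [hadd] at h
    exact_mod_cast congrArg (Nat.cast : ℕ → ℝ) h
  -- second form
  have e1 : qr (r'+s'+2) (r'+1) 2 q = 1 - q +
      (((r'+s'+2).choose 2 : ℝ))⁻¹
        * (((r'+1).choose 2 : ℝ) + (((r'+s'+2) - (r'+1)).choose 2 : ℝ)) * q := by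
    rw [e0, hnr]
    push_cast at hBeq ⊢
    field_simp
    linear_combination q * hBeq
  -- third form
  have hprodn : ((r'+s'+2:ℕ):ℝ) * (((r'+s'+2:ℕ):ℝ) - 1) = 2 * (((r'+s'+2).choose 2 : ℝ)) := by
    have h := aux_two_choose_two (r'+s'+2)
    have h2 : (((r'+s'+2) * ((r'+s'+2) - 1) : ℕ) : ℝ)
        = ((2 * (r'+s'+2).choose 2 : ℕ) : ℝ) := congrArg (Nat.cast : ℕ → ℝ) h
    push_cast at h2 ⊢
    convert h2 using 2 <;> push_cast <;> ring
  have e2 : qr (r'+s'+2) (r'+1) 2 q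
      = 1 - 2 * q * (((r'+1:ℕ):ℝ) * (((r'+s'+2:ℕ):ℝ) - ((r'+1:ℕ):ℝ)))
        / (((r'+s'+2:ℕ):ℝ) * (((r'+s'+2:ℕ):ℝ) - 1)) := by
    rw [e0, hprodn]
    have hsub : ((r'+s'+2:ℕ):ℝ) - ((r'+1:ℕ):ℝ) = ((s'+1:ℕ):ℝ) := by push_cast; ring
    rw [hsub]
    field_simp
  refine ⟨⟨hmono, e1, ?_⟩, ?_⟩
  · exact e2
  · exact hmono.trans (le_of_eq e2)
end

section
/- Let X be a nonnegative integer-valued random variable and Q a [0,1]-valued random variable (on the same probability space), and let h(x,q) = 1 - (1-q)^{max(x-1,0)}. Then for every integer n ≥ 1, E(min(X,n)² · h(min(X,n), Q)) ≤ √n · E(X h(X,Q)) + (n/ln(1+n)) · E(X h(X,Q) ln(1+X) · 1{X > √n}). -/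
open MeasureTheory

/-- `h x q = 1 - (1-q)^{(x-1)₊}` (natural subtraction, `0^0 = 1`). -/
noncomputable def hfun (x : ℕ) (q : ℝ) : ℝ := 1 - (1 - q) ^ (x - 1)

lemma hfun_nonneg {x : ℕ} {q : ℝ} (hq : q ∈ Set.Icc (0:ℝ) 1) : 0 ≤ hfun x q := by
  have h0 : (0:ℝ) ≤ 1 - q := by linarith [hq.2]
  have h1 : (1:ℝ) - q ≤ 1 := by linarith [hq.1]
  have := pow_le_one₀ h0 h1 (n := x-1)
  simp only [hfun]; linarith

lemma hfun_le_one {x : ℕ} {q : ℝ} (hq : q ∈ Set.Icc (0:ℝ) 1) : hfun x q ≤ 1 := by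
  have h0 : (0:ℝ) ≤ 1 - q := by linarith [hq.2]
  have := pow_nonneg h0 (x-1)
  simp only [hfun]; linarith

lemma hfun_mono {x y : ℕ} {q : ℝ} (hq : q ∈ Set.Icc (0:ℝ) 1) (hxy : x ≤ y) :
    hfun x q ≤ hfun y q := by
  have h0 : (0:ℝ) ≤ 1 - q := by linarith [hq.2]
  have h1 : (1:ℝ) - q ≤ 1 := by linarith [hq.1]
  have := pow_le_pow_of_le_one h0 h1 (Nat.sub_le_sub_right hxy 1)
  simp only [hfun]; linarith

lemma key_log {s t : ℝ} (hs : 0 ≤ s) (hst : s ≤ t) (ht : 0 < t) :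
    s * Real.log (1 + t) ≤ t * Real.log (1 + s) := by
  have hconc := strictConcaveOn_log_Ioi.concaveOn
  have hdiv1 : s / t ≤ 1 := div_le_one_of_le₀ hst ht.le
  have ha : (0:ℝ) ≤ 1 - s / t := by linarith
  have hb : (0:ℝ) ≤ s / t := div_nonneg hs ht.le
  have hmem1 : (1:ℝ) ∈ Set.Ioi (0:ℝ) := by norm_num
  have hmem2 : (1 + t) ∈ Set.Ioi (0:ℝ) := by simp only [Set.mem_Ioi]; linarith
  have hsum : (1 - s/t) + s/t = 1 := by ring
  have hcc := hconc.2 hmem1 hmem2 ha hb hsum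
  have heq : (1 - s/t) • (1:ℝ) + (s/t) • (1 + t) = 1 + s := by
    field_simp
    rw [smul_eq_mul, smul_eq_mul, div_mul_eq_mul_div, div_mul_eq_mul_div, ← add_div, div_eq_iff ht.ne']; ring
  rw [heq] at hcc
  simp only [smul_eq_mul, Real.log_one, mul_zero, zero_add] at hcc
  have := mul_le_mul_of_nonneg_left hcc ht.le
  calc s * Real.log (1 + t) = t * (s / t * Real.log (1 + t)) := by
        field_simp
    _ ≤ t * Real.log (1 + s) := this

theorem stmt_18 {Ω : Type*} [MeasurableSpace Ω] (μ : Measure Ω) [IsProbabilityMeasure μ]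
    (X : Ω → ℕ) (Q : Ω → ℝ) (hQ : ∀ ω, Q ω ∈ Set.Icc (0 : ℝ) 1)
    (hX : Measurable X) (hQm : Measurable Q)
    (h1 : Integrable (fun ω => (X ω : ℝ) * hfun (X ω) (Q ω)) μ)
    (h2 : Integrable (fun ω => (X ω : ℝ) * hfun (X ω) (Q ω) * Real.log (1 + (X ω : ℝ))) μ)
    (n : ℕ) (hn : 1 ≤ n) :
    ∫ ω, ((min (X ω) n : ℕ) : ℝ) ^ 2 * hfun (min (X ω) n) (Q ω) ∂μ ≤
      Real.sqrt n * ∫ ω, (X ω : ℝ) * hfun (X ω) (Q ω) ∂μ +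
        ((n : ℝ) / Real.log (1 + (n : ℝ))) *
          ∫ ω, (if Real.sqrt n < (X ω : ℝ) then
              (X ω : ℝ) * hfun (X ω) (Q ω) * Real.log (1 + (X ω : ℝ)) else 0) ∂μ := by
  have hn1 : (1:ℝ) ≤ (n:ℝ) := by exact_mod_cast hn
  have hlogn : 0 < Real.log (1 + (n:ℝ)) := Real.log_pos (by linarith)
  set c : ℝ := (n:ℝ) / Real.log (1 + (n:ℝ)) with hc
  have hcpos : 0 ≤ c := div_nonneg (Nat.cast_nonneg n) hlogn.le
  set f : Ω → ℝ := fun ω => ((min (X ω) n : ℕ) : ℝ) ^ 2 * hfun (min (X ω) n) (Q ω) with hf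
  set g2 : Ω → ℝ := fun ω => (if Real.sqrt n < (X ω : ℝ) then
      (X ω : ℝ) * hfun (X ω) (Q ω) * Real.log (1 + (X ω : ℝ)) else 0) with hg2
  -- measurability of f
  have hmf : Measurable f := by
    apply Measurable.mul
    · exact ((measurable_from_top.comp (hX.min measurable_const)).pow_const 2)
    · unfold hfun
      exact (measurable_const.sub ((measurable_const.sub hQm).pow
        (((hX.min measurable_const).sub measurable_const))))
  -- integrability of f
  have hint_f : Integrable f μ := by
    apply Integrable.mono' (integrable_const ((n:ℝ)^2)) hmf.aestronglyMeasurable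
    filter_upwards with ω
    have hm : min (X ω) n ≤ n := min_le_right _ _
    have hmR : ((min (X ω) n : ℕ) : ℝ) ≤ (n:ℝ) := by exact_mod_cast hm
    have h0 := hfun_nonneg (x := min (X ω) n) (hQ ω)
    have h1' := hfun_le_one (x := min (X ω) n) (hQ ω)
    have hm0 : (0:ℝ) ≤ ((min (X ω) n : ℕ) : ℝ) := Nat.cast_nonneg _
    have : f ω = ((min (X ω) n : ℕ) : ℝ) ^ 2 * hfun (min (X ω) n) (Q ω) := rfl
    rw [Real.norm_eq_abs, abs_of_nonneg (by positivity)]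
    have hsq : ((min (X ω) n : ℕ) : ℝ) ^ 2 ≤ (n:ℝ)^2 := by nlinarith
    calc ((min (X ω) n : ℕ) : ℝ) ^ 2 * hfun (min (X ω) n) (Q ω)
        ≤ ((min (X ω) n : ℕ) : ℝ) ^ 2 * 1 := by
          exact mul_le_mul_of_nonneg_left h1' (by positivity)
      _ ≤ (n:ℝ)^2 := by linarith
  -- integrability of g2
  have hset : MeasurableSet {ω | Real.sqrt n < (X ω : ℝ)} := by
    have : Measurable fun ω => (X ω : ℝ) := measurable_from_top.comp hX
    exact measurableSet_lt measurable_const this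
  have hint_g2 : Integrable g2 μ := by
    have heq : g2 = Set.indicator {ω | Real.sqrt n < (X ω : ℝ)}
        (fun ω => (X ω : ℝ) * hfun (X ω) (Q ω) * Real.log (1 + (X ω : ℝ))) := by
      ext ω
      by_cases hcase : Real.sqrt n < (X ω : ℝ) <;>
        simp [hg2, Set.indicator_apply, hcase]
    rw [heq]
    exact h2.indicator hset
  -- pointwise bound
  have hpt : ∀ ω, f ω ≤ Real.sqrt n * ((X ω : ℝ) * hfun (X ω) (Q ω)) + c * g2 ω := by
    intro ω
    have hq := hQ ω
    simp only [hf]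
    set x := X ω with hxdef
    set q := Q ω
    set m := min x n with hmdef
    have hm_le_x : m ≤ x := min_le_left _ _
    have hm_le_n : m ≤ n := min_le_right _ _
    have hmxR : ((m:ℕ):ℝ) ≤ (x:ℝ) := by exact_mod_cast hm_le_x
    have hmnR : ((m:ℕ):ℝ) ≤ (n:ℝ) := by exact_mod_cast hm_le_n
    have hm0 : (0:ℝ) ≤ (m:ℝ) := Nat.cast_nonneg _
    have hx0 : (0:ℝ) ≤ (x:ℝ) := Nat.cast_nonneg _
    have hh0m := hfun_nonneg (x := m) hq
    have hh0x := hfun_nonneg (x := x) hq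
    have hmono := hfun_mono (x := m) (y := x) hq hm_le_x
    have hmh : (m:ℝ) * hfun m q ≤ (x:ℝ) * hfun x q :=
      mul_le_mul hmxR hmono hh0m hx0
    by_cases hcase : Real.sqrt n < (x:ℝ)
    · have hg2v : g2 ω = (x : ℝ) * hfun x q * Real.log (1 + (x:ℝ)) := by
        simp only [hg2]; exact if_pos hcase
      rw [hg2v]
      have hkey := key_log hm0 hmnR (by linarith)
      have hm_le : (m:ℝ) ≤ c * Real.log (1 + (m:ℝ)) := by
        rw [hc, div_mul_eq_mul_div, le_div_iff₀ hlogn]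
        linarith
      have hlog_mono : Real.log (1 + (m:ℝ)) ≤ Real.log (1 + (x:ℝ)) :=
        Real.log_le_log (by linarith) (by linarith)
      have hlog0 : 0 ≤ Real.log (1 + (m:ℝ)) :=
        Real.log_nonneg (by linarith)
      have hfirst : 0 ≤ Real.sqrt n * ((x:ℝ) * hfun x q) :=
        mul_nonneg (Real.sqrt_nonneg _) (mul_nonneg hx0 hh0x)
      have : (m:ℝ)^2 * hfun m q ≤ c * ((x:ℝ) * hfun x q * Real.log (1 + (x:ℝ))) := by
        calc (m:ℝ)^2 * hfun m q = (m:ℝ) * ((m:ℝ) * hfun m q) := by ring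
          _ ≤ (c * Real.log (1 + (m:ℝ))) * ((m:ℝ) * hfun m q) :=
              mul_le_mul_of_nonneg_right hm_le (mul_nonneg hm0 hh0m)
          _ ≤ (c * Real.log (1 + (x:ℝ))) * ((x:ℝ) * hfun x q) := by
              apply mul_le_mul (mul_le_mul_of_nonneg_left hlog_mono hcpos) hmh
                (mul_nonneg hm0 hh0m) (mul_nonneg hcpos (hlog0.trans hlog_mono))
          _ = c * ((x:ℝ) * hfun x q * Real.log (1 + (x:ℝ))) := by ring
      linarith
    · have hg2v : g2 ω = 0 := by simp only [hg2]; exact if_neg hcase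
      rw [hg2v, mul_zero, add_zero]
      have hxs : (x:ℝ) ≤ Real.sqrt n := le_of_not_gt hcase
      have hms : (m:ℝ) ≤ Real.sqrt n := le_trans hmxR hxs
      calc (m:ℝ)^2 * hfun m q = (m:ℝ) * ((m:ℝ) * hfun m q) := by ring
        _ ≤ Real.sqrt n * ((x:ℝ) * hfun x q) :=
            mul_le_mul hms hmh (mul_nonneg hm0 hh0m) (Real.sqrt_nonneg _)
  -- combine
  have hint_g1 : Integrable (fun ω => Real.sqrt n * ((X ω : ℝ) * hfun (X ω) (Q ω))) μ :=
    h1.const_mul _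
  have hint_g2' : Integrable (fun ω => c * g2 ω) μ := hint_g2.const_mul _
  calc ∫ ω, f ω ∂μ ≤ ∫ ω, (Real.sqrt n * ((X ω : ℝ) * hfun (X ω) (Q ω)) + c * g2 ω) ∂μ :=
        integral_mono hint_f (hint_g1.add hint_g2') hpt
    _ = Real.sqrt n * ∫ ω, (X ω : ℝ) * hfun (X ω) (Q ω) ∂μ + c * ∫ ω, g2 ω ∂μ := by
        rw [integral_add hint_g1 hint_g2', integral_const_mul, integral_const_mul]
end
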